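/- arXiv:2305.19301 — 3 statements merged into one kernel-verified Lean document; each statement's English description precedes it below -/
import Mathlib

section
/- Let (Ω, F, P) be a probability space, G ⊆ F a sub-σ-algebra, B > 0 and μ ∈ [0,1], and let X : Ω → ℝ^d satisfy the noisy-encoder condition with parameters (μ, B) relative to G. Set m := E[X] and X̃ := E[X | G]. Then (i) ‖X̃(ω) − m‖ ≤ 2Bμ for P-almost every ω, and (ii) 0 ≤ E‖X − m‖² − E‖X − X̃‖² ≤ 4B²μ². That is, when the encoder output is almost independent of the source, the MMSE reconstruction is within O(μ) of the source mean and the MMSE distortion is within O(μ²) of the source's total variance. -/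
/-!
The noisy-encoder condition says that the conditional law of `X` given `G` is the mixture
`(1 - μ)·Law(X) + μ·Q_ω`. Integrating the identity against it gives
`E[X | G] = (1 - μ)·m + μ·b` with `b ω = ∫ x dQ_ω` in the ball of radius `B`, so
`‖X̃ - m‖ = μ‖b - m‖ ≤ 2Bμ`. Since `X - X̃` is orthogonal to every square-integrable
`G`-measurable function, `E‖X - m‖² = E‖X - X̃‖² + E‖X̃ - m‖²`, and the last term is at most
`(2Bμ)²`.
-/

open MeasureTheory ProbabilityTheory

/-- The noisy-encoder condition with parameters `(μpar, B)` relative to a sub-σ-algebra `G`: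
there is a `G`-measurable family `ω ↦ Q ω` of Borel probability measures on `ℝ^d`, each
supported in the closed ball of radius `B` around the origin, such that for every Borel set
`A`, `E[1_A(X) | G] = (1 − μpar)·P(X ∈ A) + μpar·(Q ·)(A)` almost surely. -/
def NoisyEncoder {Ω : Type*} {G F : MeasurableSpace Ω} (P : Measure Ω) {d : ℕ}
    (X : Ω → EuclideanSpace ℝ (Fin d)) (μpar B : ℝ) : Prop :=
  ∃ Q : Ω → Measure (EuclideanSpace ℝ (Fin d)),
    (∀ A : Set (EuclideanSpace ℝ (Fin d)), MeasurableSet A →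
        Measurable[G] (fun ω => Q ω A)) ∧
    (∀ ω, IsProbabilityMeasure (Q ω)) ∧
    (∀ ω, Q ω (Metric.closedBall 0 B)ᶜ = 0) ∧
    (∀ A : Set (EuclideanSpace ℝ (Fin d)), MeasurableSet A →
      (P[(X ⁻¹' A).indicator (fun _ => (1 : ℝ)) | G]) =ᵐ[P]
        (fun ω => (1 - μpar) * (P (X ⁻¹' A)).toReal + μpar * (Q ω A).toReal))

section MeasureComp
variable {α β E : Type*} {mα : MeasurableSpace α} {mβ : MeasurableSpace β}
  [NormedAddCommGroup E] [NormedSpace ℝ E] {μ : Measure α} {κ : Kernel α β} {f : β → E}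

theorem MeasureTheory.Integrable.integral_measure_comp (hf : Integrable f (κ ∘ₘ μ)) :
    Integrable (fun x => ∫ y, f y ∂κ x) μ := by
  rw [Measure.comp_eq_comp_const_apply] at hf
  simpa using hf.integral_comp

theorem MeasureTheory.Measure.integral_comp (hf : Integrable f (κ ∘ₘ μ)) :
    ∫ y, f y ∂(κ ∘ₘ μ) = ∫ x, ∫ y, f y ∂κ x ∂μ := by
  rw [Measure.comp_eq_comp_const_apply] at hf ⊢
  simpa using Kernel.integral_comp hf

end MeasureComp

section ConditionalLaw
variable {Ω E : Type*} {m m0 : MeasurableSpace Ω} {P : Measure Ω} [IsFiniteMeasure P]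
  [MeasurableSpace E] {X : Ω → E}

theorem map_restrict_eq_comp_of_condExp_indicator (hm : m ≤ m0) (hX : Measurable X)
    (κ : Kernel Ω E) [IsFiniteKernel κ]
    (hκ : ∀ A, MeasurableSet A →
      P[(X ⁻¹' A).indicator (fun _ => (1 : ℝ))|m] =ᵐ[P] fun ω => (κ ω A).toReal)
    {S : Set Ω} (hS : MeasurableSet[m] S) :
    (P.restrict S).map X = κ ∘ₘ P.restrict S := by
  ext A hA
  have hXA : MeasurableSet (X ⁻¹' A) := hX hA
  have hind : Integrable ((X ⁻¹' A).indicator fun _ => (1 : ℝ)) P :=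
    (integrable_const 1).indicator hXA
  rw [← ENNReal.toReal_eq_toReal_iff' (measure_ne_top _ _) (measure_ne_top _ _),
    Measure.map_apply hX hA, Measure.bind_apply hA κ.aemeasurable]
  calc ((P.restrict S) (X ⁻¹' A)).toReal
      = ∫ ω in S, (X ⁻¹' A).indicator (fun _ => (1 : ℝ)) ω ∂P := by
        simp [Measure.restrict_apply hXA, setIntegral_indicator hXA, Set.inter_comm,
          measureReal_def]
    _ = ∫ ω in S, (P[(X ⁻¹' A).indicator (fun _ => (1 : ℝ))|m]) ω ∂P :=
        (setIntegral_condExp hm hind hS).symm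
    _ = ∫ ω in S, (κ ω A).toReal ∂P :=
        setIntegral_congr_ae (hm S hS) ((hκ A hA).mono fun ω h _ => h)
    _ = (∫⁻ ω in S, κ ω A ∂P).toReal :=
        integral_toReal (κ.measurable_coe hA).aemeasurable (ae_of_all _ fun ω => measure_lt_top _ _)

theorem condExp_ae_eq_integral_of_condExp_indicator [NormedAddCommGroup E] [NormedSpace ℝ E]
    [CompleteSpace E] [BorelSpace E] [SecondCountableTopology E]
    (hm : m ≤ m0) (hX : Measurable X) (hXint : Integrable X P)
    (κ : @Kernel Ω E m _) [IsFiniteKernel κ]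
    (hκ : ∀ A, MeasurableSet A →
      P[(X ⁻¹' A).indicator (fun _ => (1 : ℝ))|m] =ᵐ[P] fun ω => (κ ω A).toReal) :
    P[X|m] =ᵐ[P] fun ω => ∫ x, x ∂κ ω := by
  let κ₀ : Kernel Ω E := κ.comap id (measurable_id'' hm)
  have hlaw (S : Set Ω) (hS : MeasurableSet[m] S) : (P.restrict S).map X = κ₀ ∘ₘ P.restrict S :=
    map_restrict_eq_comp_of_condExp_indicator hm hX κ₀ hκ hS
  have hint (S : Set Ω) (hS : MeasurableSet[m] S) : Integrable id (κ₀ ∘ₘ P.restrict S) := by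
    rw [← hlaw S hS, integrable_map_measure aestronglyMeasurable_id hX.aemeasurable]
    exact hXint.restrict
  refine (ae_eq_condExp_of_forall_setIntegral_eq hm hXint
    (fun S hS _ => (hint S hS).integral_measure_comp) (fun S hS _ => ?_) ?_).symm
  · calc ∫ ω in S, ∫ x, x ∂κ ω ∂P = ∫ x, id x ∂(κ₀ ∘ₘ P.restrict S) :=
          (Measure.integral_comp (hint S hS)).symm
      _ = ∫ x, id x ∂((P.restrict S).map X) := by rw [hlaw S hS]
      _ = ∫ ω in S, X ω ∂P := integral_map hX.aemeasurable aestronglyMeasurable_id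
  · exact (stronglyMeasurable_id.integral_kernel (κ := κ)).aestronglyMeasurable

end ConditionalLaw

section Mixture
variable {Ω E : Type*} {mΩ : MeasurableSpace Ω} [MeasurableSpace E] {μpar : ℝ} {ν : Measure E}
  {Q : Ω → Measure E}

noncomputable def mixtureKernel (ν : Measure E) (μpar : ℝ) (Q : Ω → Measure E)
    (hQ : ∀ A, MeasurableSet A → Measurable fun ω => Q ω A) : Kernel Ω E where
  toFun ω := ENNReal.ofReal (1 - μpar) • ν + ENNReal.ofReal μpar • Q ω
  measurable' := Measure.measurable_of_measurable_coe _ fun A hA => by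
    simp only [Measure.add_apply, Measure.smul_apply, smul_eq_mul]
    exact measurable_const.add (measurable_const.mul (hQ A hA))

theorem mixtureKernel_apply (hQ : ∀ A, MeasurableSet A → Measurable fun ω => Q ω A) (ω : Ω) :
    mixtureKernel ν μpar Q hQ ω = ENNReal.ofReal (1 - μpar) • ν + ENNReal.ofReal μpar • Q ω :=
  rfl

theorem isMarkovKernel_mixtureKernel [IsProbabilityMeasure ν] (hμ : μpar ∈ Set.Icc (0 : ℝ) 1)
    (hQ : ∀ A, MeasurableSet A → Measurable fun ω => Q ω A)
    (hQprob : ∀ ω, IsProbabilityMeasure (Q ω)) :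
    IsMarkovKernel (mixtureKernel ν μpar Q hQ) := by
  refine ⟨fun ω => ⟨?_⟩⟩
  simp [mixtureKernel_apply, ← ENNReal.ofReal_add (sub_nonneg.mpr hμ.2) hμ.1]

theorem integral_mixtureKernel {F : Type*} [NormedAddCommGroup F] [NormedSpace ℝ F] {f : E → F}
    (hμ : μpar ∈ Set.Icc (0 : ℝ) 1) (hQ : ∀ A, MeasurableSet A → Measurable fun ω => Q ω A)
    (ω : Ω) (hfν : Integrable f ν) (hfQ : Integrable f (Q ω)) :
    ∫ x, f x ∂mixtureKernel ν μpar Q hQ ω = (1 - μpar) • ∫ x, f x ∂ν + μpar • ∫ x, f x ∂Q ω := by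
  rw [mixtureKernel_apply, integral_add_measure (hfν.smul_measure ENNReal.ofReal_ne_top)
    (hfQ.smul_measure ENNReal.ofReal_ne_top), integral_smul_measure, integral_smul_measure,
    ENNReal.toReal_ofReal (sub_nonneg.mpr hμ.2), ENNReal.toReal_ofReal hμ.1]

end Mixture

section NoisyEncoder
variable {Ω : Type*} {G F : MeasurableSpace Ω} {P : Measure Ω} [IsProbabilityMeasure P] {d : ℕ}
  {X : Ω → EuclideanSpace ℝ (Fin d)} {μpar B : ℝ}

theorem NoisyEncoder.exists_condExp_ae_eq_mixture (hG : G ≤ F) (hμ : μpar ∈ Set.Icc (0 : ℝ) 1)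
    (hX : Measurable X) (hXint : Integrable X P) (hne : NoisyEncoder (G := G) P X μpar B) :
    ∃ b : Ω → EuclideanSpace ℝ (Fin d), (∀ ω, ‖b ω‖ ≤ B) ∧
      P[X|G] =ᵐ[P] fun ω => (1 - μpar) • (∫ ω', X ω' ∂P) + μpar • b ω := by
  obtain ⟨Q, hQmeas, hQprob, hQball, hQcond⟩ := hne
  have hQB (ω : Ω) : ∀ᵐ x ∂Q ω, ‖x‖ ≤ B :=
    measure_mono_null (fun x hx => by simpa using hx) (hQball ω)
  let κ := mixtureKernel (mΩ := G) (P.map X) μpar Q hQmeas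
  have : IsProbabilityMeasure (P.map X) := Measure.isProbabilityMeasure_map hX.aemeasurable
  have : IsMarkovKernel κ := isMarkovKernel_mixtureKernel hμ hQmeas hQprob
  have hκ (A : Set (EuclideanSpace ℝ (Fin d))) (hA : MeasurableSet A) :
      P[(X ⁻¹' A).indicator (fun _ => (1 : ℝ))|G] =ᵐ[P] fun ω => (κ ω A).toReal := by
    filter_upwards [hQcond A hA] with ω h
    rw [h, mixtureKernel_apply, Measure.add_apply, Measure.smul_apply, Measure.smul_apply,
      Measure.map_apply hX hA, smul_eq_mul, smul_eq_mul, ENNReal.toReal_add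
      (by finiteness) (by finiteness), ENNReal.toReal_mul, ENNReal.toReal_mul,
      ENNReal.toReal_ofReal (sub_nonneg.mpr hμ.2), ENNReal.toReal_ofReal hμ.1]
  refine ⟨fun ω => ∫ x, x ∂Q ω, fun ω => by simpa using norm_integral_le_of_norm_le_const (hQB ω),
    ?_⟩
  filter_upwards [condExp_ae_eq_integral_of_condExp_indicator hG hX hXint κ hκ] with ω h
  rw [h, integral_mixtureKernel (f := fun x => x) hμ hQmeas ω
    ((integrable_map_measure aestronglyMeasurable_id hX.aemeasurable).mpr hXint)
    ((integrable_const B).mono' aestronglyMeasurable_id (hQB ω)),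
    integral_map (f := fun x => x) hX.aemeasurable aestronglyMeasurable_id]

end NoisyEncoder

section Pythagoras
variable {Ω E : Type*} {m m0 : MeasurableSpace Ω} {P : Measure Ω}
  [NormedAddCommGroup E] [InnerProductSpace ℝ E]

theorem MeasureTheory.MemLp.integrable_inner {f g : Ω → E} (hf : MemLp f 2 P) (hg : MemLp g 2 P) :
    Integrable (fun ω => inner ℝ (f ω) (g ω)) P :=
  memLp_one_iff_integrable.mp <| hf.of_bilin (fun x y => inner ℝ x y) 1 hg
    (hf.1.inner hg.1) (ae_of_all _ fun ω => by simpa using nnnorm_inner_le_nnnorm (𝕜 := ℝ) _ _)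

variable [CompleteSpace E]

theorem integral_inner_condExp_sub_eq_zero (hm : m ≤ m0) [IsFiniteMeasure P] {X Z : Ω → E}
    (hX : MemLp X 2 P) (hZ : MemLp Z 2 P) (hZm : StronglyMeasurable[m] Z) :
    ∫ ω, inner ℝ (Z ω) (X ω - (P[X|m]) ω) ∂P = 0 := by
  have hY : MemLp (P[X|m]) 2 P := hX.condExp one_le_two
  have hXY : MemLp (X - P[X|m]) 2 P := hX.sub hY
  have hpull : P[fun ω => inner ℝ (Z ω) (X ω - (P[X|m]) ω)|m]
      =ᵐ[P] fun ω => inner ℝ (Z ω) ((P[X - P[X|m]|m]) ω) :=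
    condExp_bilin_of_stronglyMeasurable_left (innerSL ℝ) hZm (hZ.integrable_inner hXY)
      (hXY.integrable one_le_two)
  have hzero : P[X - P[X|m]|m] =ᵐ[P] 0 := by
    filter_upwards [condExp_sub (m := m) (hX.integrable one_le_two) (hY.integrable one_le_two)]
      with ω h
    rw [h, Pi.sub_apply, condExp_of_stronglyMeasurable hm stronglyMeasurable_condExp
      integrable_condExp, sub_self, Pi.zero_apply]
  rw [← integral_condExp hm]
  refine integral_eq_zero_of_ae ?_
  filter_upwards [hpull, hzero] with ω h1 h2
  rw [h1, h2, Pi.zero_apply, inner_zero_right, Pi.zero_apply]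

theorem integral_norm_sub_sq_eq_integral_norm_sub_condExp_sq_add (hm : m ≤ m0)
    [IsFiniteMeasure P] {X : Ω → E} (hX : MemLp X 2 P) (c : E) :
    ∫ ω, ‖X ω - c‖ ^ 2 ∂P = ∫ ω, ‖X ω - (P[X|m]) ω‖ ^ 2 ∂P + ∫ ω, ‖(P[X|m]) ω - c‖ ^ 2 ∂P := by
  have hY : MemLp (P[X|m]) 2 P := hX.condExp one_le_two
  have hXY : MemLp (fun ω => X ω - (P[X|m]) ω) 2 P := hX.sub hY
  have hYc : MemLp (fun ω => (P[X|m]) ω - c) 2 P := hY.sub (memLp_const c)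
  have hcross := integral_inner_condExp_sub_eq_zero hm hX hYc
    (stronglyMeasurable_condExp.sub stronglyMeasurable_const)
  calc ∫ ω, ‖X ω - c‖ ^ 2 ∂P
      = ∫ ω, (‖X ω - (P[X|m]) ω‖ ^ 2 + ‖(P[X|m]) ω - c‖ ^ 2
          + 2 * inner ℝ ((P[X|m]) ω - c) (X ω - (P[X|m]) ω)) ∂P := by
        congr 1 with ω
        rw [← sub_add_sub_cancel (X ω) ((P[X|m]) ω) c, norm_add_sq_real, real_inner_comm]
        ring
    _ = _ := by
        have hXY2 := hXY.integrable_norm_pow two_ne_zero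
        have hYc2 := hYc.integrable_norm_pow two_ne_zero
        rw [integral_add, integral_add hXY2 hYc2, integral_const_mul, hcross, mul_zero, add_zero]
        · exact hXY2.add hYc2
        · exact (hYc.integrable_inner hXY).const_mul 2

end Pythagoras

theorem statement5_general {Ω : Type*} {G F : MeasurableSpace Ω} (hG : G ≤ F)
    (P : Measure Ω) [IsProbabilityMeasure P] {d : ℕ}
    (B μpar : ℝ) (hμ : μpar ∈ Set.Icc (0 : ℝ) 1)
    (X : Ω → EuclideanSpace ℝ (Fin d)) (hXmeas : Measurable X)
    (hXbdd : ∀ᵐ ω ∂P, ‖X ω‖ ≤ B)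
    (hne : NoisyEncoder (G := G) P X μpar B) :
    (∀ᵐ ω ∂P, ‖(P[X|G]) ω - ∫ ω', X ω' ∂P‖ ≤ 2 * B * μpar) ∧
    (0 ≤ (∫ ω, ‖X ω - ∫ ω', X ω' ∂P‖ ^ 2 ∂P) - ∫ ω, ‖X ω - (P[X|G]) ω‖ ^ 2 ∂P) ∧
    ((∫ ω, ‖X ω - ∫ ω', X ω' ∂P‖ ^ 2 ∂P) - (∫ ω, ‖X ω - (P[X|G]) ω‖ ^ 2 ∂P)
      ≤ 4 * B ^ 2 * μpar ^ 2) := by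
  have hXL2 : MemLp X 2 P := .of_bound hXmeas.aestronglyMeasurable B hXbdd
  have hmB : ‖∫ ω, X ω ∂P‖ ≤ B := by simpa using norm_integral_le_of_norm_le_const hXbdd
  obtain ⟨b, hbB, hcond⟩ :=
    hne.exists_condExp_ae_eq_mixture hG hμ hXmeas (hXL2.integrable one_le_two)
  have hclose : ∀ᵐ ω ∂P, ‖(P[X|G]) ω - ∫ ω', X ω' ∂P‖ ≤ 2 * B * μpar := by
    filter_upwards [hcond] with ω h
    have hsplit : (1 - μpar) • ∫ ω', X ω' ∂P + μpar • b ω - ∫ ω', X ω' ∂P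
        = μpar • (b ω - ∫ ω', X ω' ∂P) := by module
    rw [h, hsplit, norm_smul, Real.norm_of_nonneg hμ.1]
    nlinarith [norm_sub_le (b ω) (∫ ω', X ω' ∂P), hbB ω, hμ.1]
  rw [integral_norm_sub_sq_eq_integral_norm_sub_condExp_sq_add hG hXL2, add_sub_cancel_left]
  refine ⟨hclose, integral_nonneg fun ω => sq_nonneg _, ?_⟩
  calc ∫ ω, ‖(P[X|G]) ω - ∫ ω', X ω' ∂P‖ ^ 2 ∂P
      ≤ ∫ _ω, (2 * B * μpar) ^ 2 ∂P :=
        integral_mono_of_nonneg (ae_of_all _ fun ω => sq_nonneg _) (integrable_const _)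
          (hclose.mono fun ω h => pow_le_pow_left₀ (norm_nonneg _) h 2)
    _ = 4 * B ^ 2 * μpar ^ 2 := by rw [integral_const, probReal_univ, one_smul]; ring

/-- Under the noisy-encoder condition (encoder output almost independent of the source),
the MMSE reconstruction `X̃ = E[X|G]` is within `2Bμ` of the source mean `m = E[X]`
almost surely, and the MMSE distortion is within `4B²μ²` of the total variance
`E‖X − m‖²` (from below). -/
theorem statement5 {Ω : Type*} {G F : MeasurableSpace Ω} (hG : G ≤ F)
    (P : Measure Ω) [IsProbabilityMeasure P] {d : ℕ}
    (B μpar : ℝ) (hB : 0 < B) (hμ : μpar ∈ Set.Icc (0 : ℝ) 1)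
    (X : Ω → EuclideanSpace ℝ (Fin d)) (hXmeas : Measurable X)
    (hXbdd : ∀ᵐ ω ∂P, ‖X ω‖ ≤ B)
    (hne : NoisyEncoder (G := G) P X μpar B) :
    (∀ᵐ ω ∂P, ‖(P[X|G]) ω - ∫ ω', X ω' ∂P‖ ≤ 2 * B * μpar) ∧
    (0 ≤ (∫ ω, ‖X ω - ∫ ω', X ω' ∂P‖ ^ 2 ∂P) - ∫ ω, ‖X ω - (P[X|G]) ω‖ ^ 2 ∂P) ∧
    ((∫ ω, ‖X ω - ∫ ω', X ω' ∂P‖ ^ 2 ∂P) - (∫ ω, ‖X ω - (P[X|G]) ω‖ ^ 2 ∂P)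
      ≤ 4 * B ^ 2 * μpar ^ 2) :=
  statement5_general hG P B μpar hμ X hXmeas hXbdd hne
end

section
/- Let σ > 0 and ρ ∈ (0, 1]. For ε > 0 set c := 1 − 2^{−2ε} and define V(ε) := inf { 2σ² − 2 ω₁ ρ σ² − 2 ω₂ σ² : (ω₁, ω₂) ∈ ℝ², ω₂² (1 − ρ² (1 − c)) ≤ (1 − ω₁² − 2 ω₁ ω₂ ρ) · c }. Then there exist constants C > 0 and ε₀ > 0 such that for all ε ∈ (0, ε₀), |V(ε) − (2(1 − ρ)σ² − ((1 − ρ²)/ρ) · (2 ln 2) · ε · σ²)| ≤ C ε². (V(ε) is the minimum second-frame distortion under zero framewise-marginal perception loss when the first frame is available losslessly, R₁ = ∞, and the second frame is compressed at low rate R₂ = ε; the optimal reconstruction essentially copies the first frame.) -/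
open MeasureTheory

/-- `cRate ε = 1 − 2^{−2ε}`, the quantity `c` associated with rate `ε`. -/
noncomputable def cRate (ε : ℝ) : ℝ := 1 - (2 : ℝ) ^ (-(2 * ε))

/-!
The constraint says that `(ω₁, ω₂)` lies in an ellipse `ωᵀAω ≤ c`, so by Cauchy–Schwarz the
program is solved in closed form: `V(ε) = 2σ²(1 − √(ρ² + c(1 − ρ²)))`. The asymptotics then
follow from `√(ρ² + x) = ρ + x/(2ρ) + O(x²)` and `c = 1 − e^{−2ε ln 2} = 2ε ln 2 + O(ε²)`.
-/

open Real

lemma cRate_eq_one_sub_exp (ε : ℝ) : cRate ε = 1 - exp (-(2 * log 2 * ε)) := by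
  rw [cRate, rpow_def_of_pos two_pos]; ring_nf

lemma cRate_pos {ε : ℝ} (hε : 0 < ε) : 0 < cRate ε := by
  rw [cRate_eq_one_sub_exp, sub_pos, exp_lt_one_iff]
  have := log_pos one_lt_two
  nlinarith

lemma cRate_le (ε : ℝ) : cRate ε ≤ 2 * log 2 * ε := by
  rw [cRate_eq_one_sub_exp]; linarith [add_one_le_exp (-(2 * log 2 * ε))]

lemma sub_cRate_le {ε : ℝ} (hε : |2 * log 2 * ε| ≤ 1) :
    2 * log 2 * ε - cRate ε ≤ (2 * log 2 * ε) ^ 2 := by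
  have h := abs_exp_sub_one_sub_id_le (x := -(2 * log 2 * ε)) (by rwa [abs_neg])
  rw [cRate_eq_one_sub_exp, neg_sq] at *
  linarith [(abs_le.mp h).2]

lemma abs_sqrt_sq_add_sub_le {ρ x : ℝ} (hρ : 0 < ρ) (hx : 0 ≤ x) :
    |√(ρ ^ 2 + x) - (ρ + x / (2 * ρ))| ≤ x ^ 2 / (8 * ρ ^ 3) := by
  set s := √(ρ ^ 2 + x) with hs
  have hs_sq : s ^ 2 = ρ ^ 2 + x := sq_sqrt (by positivity)
  have hρs : ρ ≤ s := (le_sqrt hρ.le (by positivity)).mpr (by linarith)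
  -- `ρ + x/(2ρ) - s = (s - ρ)²/(2ρ)` and `s - ρ = x/(s + ρ) ≤ x/(2ρ)`
  have hgap : ρ + x / (2 * ρ) - s = (s - ρ) ^ 2 / (2 * ρ) := by
    field_simp; linear_combination -hs_sq
  have hdiff : s - ρ ≤ x / (2 * ρ) := by
    rw [le_div_iff₀ (by positivity)]; nlinarith
  rw [abs_sub_comm, abs_of_nonneg (by rw [hgap]; positivity), hgap]
  calc (s - ρ) ^ 2 / (2 * ρ) ≤ (x / (2 * ρ)) ^ 2 / (2 * ρ) := by
        gcongr
    _ = x ^ 2 / (8 * ρ ^ 3) := by field_simp; ring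

section Program

variable {σ ρ c : ℝ}

lemma sq_add_mul_one_sub_sq_pos (hc : 0 < c) (hρ : ρ ^ 2 ≤ 1) : 0 < ρ ^ 2 + c * (1 - ρ ^ 2) := by
  rcases le_or_gt c 1 with hc1 | hc1
  · nlinarith [mul_nonneg (sq_nonneg ρ) (sub_nonneg.mpr hc1)]
  · nlinarith [mul_le_mul_of_nonneg_right hc1.le (sub_nonneg.mpr hρ)]

lemma mul_add_le_sqrt_of_feasible (hc : 0 < c) (hρ : ρ ^ 2 ≤ 1) {ω₁ ω₂ : ℝ}
    (h : ω₂ ^ 2 * (1 - ρ ^ 2 * (1 - c)) ≤ (1 - ω₁ ^ 2 - 2 * ω₁ * ω₂ * ρ) * c) :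
    ρ * ω₁ + ω₂ ≤ √(ρ ^ 2 + c * (1 - ρ ^ 2)) := by
  set K := ρ ^ 2 + c * (1 - ρ ^ 2) with hK
  have hK_pos : 0 < K := sq_add_mul_one_sub_sq_pos hc hρ
  -- Cauchy–Schwarz for the form `A = [[c, cρ], [cρ, 1 - ρ² + cρ²]]`, of determinant `c(1 - ρ²)`
  have hid : c * (K - (ρ * ω₁ + ω₂) ^ 2) =
      K * ((1 - ω₁ ^ 2 - 2 * ω₁ * ω₂ * ρ) * c - ω₂ ^ 2 * (1 - ρ ^ 2 * (1 - c)))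
        + (1 - ρ ^ 2) * (c * ω₁ - ρ * (1 - c) * ω₂) ^ 2 := by
    rw [hK]; ring
  have hsq : (ρ * ω₁ + ω₂) ^ 2 ≤ K := by
    have : 0 ≤ c * (K - (ρ * ω₁ + ω₂) ^ 2) := by
      rw [hid]
      exact add_nonneg (mul_nonneg hK_pos.le (by linarith)) (mul_nonneg (by linarith) (sq_nonneg _))
    nlinarith
  exact le_sqrt_of_sq_le hsq

lemma isLeast_distortion (hc : 0 < c) (hρ : ρ ^ 2 ≤ 1) :
    IsLeast { v : ℝ | ∃ ω₁ ω₂ : ℝ,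
        ω₂ ^ 2 * (1 - ρ ^ 2 * (1 - c)) ≤ (1 - ω₁ ^ 2 - 2 * ω₁ * ω₂ * ρ) * c ∧
        v = 2 * σ ^ 2 - 2 * ω₁ * ρ * σ ^ 2 - 2 * ω₂ * σ ^ 2 }
      (2 * σ ^ 2 * (1 - √(ρ ^ 2 + c * (1 - ρ ^ 2)))) := by
  set s := √(ρ ^ 2 + c * (1 - ρ ^ 2))
  have hK_pos := sq_add_mul_one_sub_sq_pos hc hρ
  have hs_sq : s ^ 2 = ρ ^ 2 + c * (1 - ρ ^ 2) := sq_sqrt hK_pos.le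
  have hs_pos : 0 < s := sqrt_pos.mpr hK_pos
  constructor
  · -- the optimiser `(ω₁, ω₂) ∝ A⁻¹ (ρ, 1) ∝ (ρ(1 - c), c)`
    refine ⟨ρ * (1 - c) / s, c / s, le_of_eq ?_, ?_⟩
    · field_simp; linear_combination -hs_sq
    · field_simp; linear_combination -σ ^ 2 * hs_sq
  · rintro v ⟨ω₁, ω₂, h, rfl⟩
    have := mul_add_le_sqrt_of_feasible hc hρ h
    nlinarith [mul_nonneg (sq_nonneg σ) (sub_nonneg.mpr this)]

lemma abs_distortion_sub_le (hρ : ρ ∈ Set.Ioc (0 : ℝ) 1) (hc : 0 ≤ c) {L : ℝ} (hcL : c ≤ L)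
    (hLc : L - c ≤ L ^ 2) :
    |2 * σ ^ 2 * (1 - √(ρ ^ 2 + c * (1 - ρ ^ 2)))
        - (2 * (1 - ρ) * σ ^ 2 - (1 - ρ ^ 2) / ρ * L * σ ^ 2)|
      ≤ σ ^ 2 * (1 / (4 * ρ ^ 3) + (1 - ρ ^ 2) / ρ) * L ^ 2 := by
  obtain ⟨hρ0, hρ1⟩ := hρ
  set x := c * (1 - ρ ^ 2)
  have hρ_sq : 0 ≤ 1 - ρ ^ 2 := by nlinarith
  have hx : 0 ≤ x := mul_nonneg hc hρ_sq
  have hxL : x ^ 2 ≤ L ^ 2 := pow_le_pow_left₀ hx (by nlinarith) 2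
  have hsplit : 2 * σ ^ 2 * (1 - √(ρ ^ 2 + x)) - (2 * (1 - ρ) * σ ^ 2 - (1 - ρ ^ 2) / ρ * L * σ ^ 2)
      = -(2 * σ ^ 2) * (√(ρ ^ 2 + x) - (ρ + x / (2 * ρ))) + σ ^ 2 * (1 - ρ ^ 2) / ρ * (L - c) := by
    field_simp; ring
  rw [hsplit]
  calc _ ≤ |-(2 * σ ^ 2) * (√(ρ ^ 2 + x) - (ρ + x / (2 * ρ)))|
        + |σ ^ 2 * (1 - ρ ^ 2) / ρ * (L - c)| := abs_add_le _ _
    _ ≤ 2 * σ ^ 2 * (x ^ 2 / (8 * ρ ^ 3)) + σ ^ 2 * (1 - ρ ^ 2) / ρ * L ^ 2 := by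
        rw [abs_mul, abs_mul, abs_neg, abs_of_nonneg (by positivity : (0 : ℝ) ≤ 2 * σ ^ 2),
          abs_of_nonneg (by positivity : 0 ≤ σ ^ 2 * (1 - ρ ^ 2) / ρ),
          abs_of_nonneg (by linarith : 0 ≤ L - c)]
        gcongr
        exact abs_sqrt_sq_add_sub_le hρ0 hx
    _ ≤ 2 * σ ^ 2 * (L ^ 2 / (8 * ρ ^ 3)) + σ ^ 2 * (1 - ρ ^ 2) / ρ * L ^ 2 := by gcongr
    _ = _ := by field_simp; ring

end Program

/-- Asymptotics of the minimum second-frame distortion under zero framewise-marginal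
perception loss (0-PLF-FMD) when the first frame is available losslessly (`R₁ = ∞`) and
the second frame is compressed at low rate `R₂ = ε`: with `c := 1 − 2^{−2ε}`, the optimal
value `V(ε)` of the displayed program satisfies
`V(ε) = 2(1 − ρ)σ² − ((1 − ρ²)/ρ)·(2 ln 2)·ε·σ² + O(ε²)`. -/
theorem statement11 (σ ρ : ℝ) (hσ : 0 < σ) (hρ : ρ ∈ Set.Ioc (0 : ℝ) 1) :
    ∃ C : ℝ, 0 < C ∧ ∃ ε₀ : ℝ, 0 < ε₀ ∧ ∀ ε ∈ Set.Ioo (0 : ℝ) ε₀,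
      |sInf { v : ℝ | ∃ ω₁ ω₂ : ℝ,
            ω₂ ^ 2 * (1 - ρ ^ 2 * (1 - cRate ε)) ≤
              (1 - ω₁ ^ 2 - 2 * ω₁ * ω₂ * ρ) * cRate ε ∧
            v = 2 * σ ^ 2 - 2 * ω₁ * ρ * σ ^ 2 - 2 * ω₂ * σ ^ 2 }
          - (2 * (1 - ρ) * σ ^ 2 - ((1 - ρ ^ 2) / ρ) * (2 * Real.log 2) * ε * σ ^ 2)|
        ≤ C * ε ^ 2 := by
  have hρ0 : 0 < ρ := hρ.1
  have hρ_sq : 0 ≤ 1 - ρ ^ 2 := by nlinarith [hρ.2]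
  have hlog2 : 0 < log 2 ∧ log 2 < 1 := ⟨log_pos one_lt_two, log_two_lt_d9.trans (by norm_num)⟩
  refine ⟨σ ^ 2 * (1 / (4 * ρ ^ 3) + (1 - ρ ^ 2) / ρ) * (2 * log 2) ^ 2, by positivity,
    1 / 2, by norm_num, ?_⟩
  rintro ε ⟨hε0, hε1⟩
  have hL : |2 * log 2 * ε| ≤ 1 := by
    rw [abs_of_pos (by positivity)]; nlinarith
  rw [(isLeast_distortion (cRate_pos hε0) (by linarith)).csInf_eq, mul_assoc _ (2 * log 2) ε]
  convert abs_distortion_sub_le hρ (cRate_pos hε0).le (cRate_le ε) (sub_cRate_le hL)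
    using 1
  ring
end

section
/- Let σ > 0 and ρ ∈ (0, 1). For ε > 0 set c := 1 − 2^{−2ε} and define V(ε) := inf { 2σ² − 2 ω₁ ρ σ² − 2 ω₂ σ² : (ω₁, ω₂) ∈ ℝ², ω₂² (1 − ρ² (1 − c)) ≤ (1 − ω₁² − 2 ω₁ ω₂ ρ) · c, and ω₁ + ρ ω₂ = ρ }. Then there exist constants C > 0 and ε₀ > 0 such that for all ε ∈ (0, ε₀), |V(ε) − 2σ²(1 − ρ²)(1 − √(2 ε ln 2))| ≤ C ε. (V(ε) is the minimum second-frame distortion under zero joint-distribution perception loss when the first frame is available losslessly, R₁ = ∞, and the second frame is compressed at low rate R₂ = ε; the joint-distribution constraint prevents the decoder from simply copying the first frame.) -/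
/-!
Eliminating `ω₁ = ρ(1 - ω₂)` turns the rate constraint into `(1 - ρ²) ω₂² ≤ (1 - ρ²) c` and the
distortion into `2σ²(1 - ρ²)(1 - ω₂)`, so `V(ε) = 2σ²(1 - ρ²)(1 - √c)` exactly. With
`t = 2ε ln 2` one has `c = 1 - e^{-t}` and `t - t² ≤ c ≤ t`, whence `0 ≤ √t - √c ≤ √(t - c) ≤ t`.
-/

open MeasureTheory

open Real

theorem Real.sqrt_sub_sqrt_le_sqrt_sub (a b : ℝ) : √a - √b ≤ √(a - b) := by
  rcases le_total b 0 with hb | hb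
  · rw [sqrt_eq_zero'.2 hb, sub_zero]
    exact sqrt_le_sqrt (by linarith)
  rcases le_total a b with hab | hab
  · linarith [sqrt_le_sqrt hab, sqrt_nonneg (a - b)]
  rw [sub_le_iff_le_add, sqrt_le_left (by positivity)]
  nlinarith [sq_sqrt hb, sq_sqrt (sub_nonneg.2 hab),
    mul_nonneg (sqrt_nonneg (a - b)) (sqrt_nonneg b)]

theorem Real.exp_neg_le_one_sub_add_sq {t : ℝ} (ht : 0 ≤ t) : exp (-t) ≤ 1 - t + t ^ 2 := by
  have hmul : exp (-t) * (1 + t) ≤ 1 := by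
    calc exp (-t) * (1 + t) ≤ exp (-t) * exp t := by gcongr; linarith [add_one_le_exp t]
      _ = 1 := by rw [← exp_add, neg_add_cancel, exp_zero]
  -- `(1 - t + t²)(1 + t) = 1 + t³ ≥ 1`
  nlinarith [exp_pos (-t), pow_nonneg ht 3]

theorem sqrt_sub_sqrt_one_sub_exp_neg_mem_Icc {t : ℝ} (ht : 0 ≤ t) :
    √t - √(1 - exp (-t)) ∈ Set.Icc 0 t := by
  constructor
  · exact sub_nonneg.2 (sqrt_le_sqrt (by linarith [one_sub_le_exp_neg t]))
  · calc √t - √(1 - exp (-t)) ≤ √(t - (1 - exp (-t))) := sqrt_sub_sqrt_le_sqrt_sub _ _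
      _ ≤ √(t ^ 2) := sqrt_le_sqrt (by linarith [exp_neg_le_one_sub_add_sq ht])
      _ = t := sqrt_sq ht

theorem cRate_eq_one_sub_exp_neg (ε : ℝ) : cRate ε = 1 - exp (-(2 * ε * log 2)) := by
  rw [cRate, rpow_def_of_pos two_pos]
  ring_nf

def achievableDistortions (σ ρ c : ℝ) : Set ℝ :=
  { v : ℝ | ∃ ω₁ ω₂ : ℝ,
    ω₂ ^ 2 * (1 - ρ ^ 2 * (1 - c)) ≤ (1 - ω₁ ^ 2 - 2 * ω₁ * ω₂ * ρ) * c ∧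
    ω₁ + ρ * ω₂ = ρ ∧
    v = 2 * σ ^ 2 - 2 * ω₁ * ρ * σ ^ 2 - 2 * ω₂ * σ ^ 2 }

theorem mem_achievableDistortions_iff {σ ρ c v : ℝ} (hρ : ρ ^ 2 < 1) :
    v ∈ achievableDistortions σ ρ c ↔
      ∃ ω : ℝ, ω ^ 2 ≤ c ∧ v = 2 * σ ^ 2 * (1 - ρ ^ 2) * (1 - ω) := by
  have h1ρ : 0 < 1 - ρ ^ 2 := by linarith
  constructor
  · rintro ⟨ω₁, ω, hrate, hcorr, rfl⟩
    obtain rfl : ω₁ = ρ * (1 - ω) := by linarith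
    refine ⟨ω, le_of_mul_le_mul_left ?_ h1ρ, by ring⟩
    linear_combination hrate
  · rintro ⟨ω, hω, rfl⟩
    refine ⟨ρ * (1 - ω), ω, ?_, by ring, by ring⟩
    linear_combination (1 - ρ ^ 2) * hω

theorem isLeast_achievableDistortions {σ ρ c : ℝ} (hρ : ρ ^ 2 < 1) (hc : 0 ≤ c) :
    IsLeast (achievableDistortions σ ρ c) (2 * σ ^ 2 * (1 - ρ ^ 2) * (1 - √c)) := by
  have hA : 0 ≤ 2 * σ ^ 2 * (1 - ρ ^ 2) := by nlinarith [sq_nonneg σ]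
  refine ⟨(mem_achievableDistortions_iff hρ).2 ⟨√c, (sq_sqrt hc).le, rfl⟩, ?_⟩
  rintro v hv
  obtain ⟨ω, hω, rfl⟩ := (mem_achievableDistortions_iff hρ).1 hv
  have hω_le : ω ≤ √c := le_sqrt_of_sq_le hω
  gcongr

/-- Asymptotics of the minimum second-frame distortion under zero joint-distribution
perception loss (0-PLF-JD) when the first frame is available losslessly (`R₁ = ∞`) and
the second frame is compressed at low rate `R₂ = ε`: with `c := 1 − 2^{−2ε}` and the
cross-correlation constraint `ω₁ + ρω₂ = ρ`, the optimal value `V(ε)` satisfies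
`V(ε) = 2σ²(1 − ρ²)(1 − √(2ε·ln 2)) + O(ε)`. -/
theorem statement12 (σ ρ : ℝ) (hσ : 0 < σ) (hρ : ρ ∈ Set.Ioo (0 : ℝ) 1) :
    ∃ C : ℝ, 0 < C ∧ ∃ ε₀ : ℝ, 0 < ε₀ ∧ ∀ ε ∈ Set.Ioo (0 : ℝ) ε₀,
      |sInf { v : ℝ | ∃ ω₁ ω₂ : ℝ,
            ω₂ ^ 2 * (1 - ρ ^ 2 * (1 - cRate ε)) ≤
              (1 - ω₁ ^ 2 - 2 * ω₁ * ω₂ * ρ) * cRate ε ∧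
            ω₁ + ρ * ω₂ = ρ ∧
            v = 2 * σ ^ 2 - 2 * ω₁ * ρ * σ ^ 2 - 2 * ω₂ * σ ^ 2 }
          - 2 * σ ^ 2 * (1 - ρ ^ 2) * (1 - Real.sqrt (2 * ε * Real.log 2))|
        ≤ C * ε := by
  have hρ1 : ρ ^ 2 < 1 := by nlinarith [hρ.1, hρ.2]
  have hlog2 : 0 < log 2 := log_pos one_lt_two
  refine ⟨4 * σ ^ 2 * log 2, by positivity, 1, one_pos, ?_⟩
  rintro ε ⟨hε, -⟩
  set t := 2 * ε * log 2
  have hc : 0 ≤ 1 - exp (-t) := by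
    linarith [exp_le_one_iff.2 (neg_nonpos.2 (by positivity : 0 ≤ t))]
  change |sInf (achievableDistortions σ ρ (cRate ε)) - _| ≤ _
  rw [cRate_eq_one_sub_exp_neg, (isLeast_achievableDistortions hρ1 hc).csInf_eq]
  obtain ⟨hgap0, hgap⟩ := sqrt_sub_sqrt_one_sub_exp_neg_mem_Icc (by positivity : 0 ≤ t)
  have hA : 2 * σ ^ 2 * (1 - ρ ^ 2) ≤ 2 * σ ^ 2 := by nlinarith [sq_nonneg ρ]
  rw [← mul_sub, sub_sub_sub_cancel_left, abs_of_nonneg (mul_nonneg (by nlinarith) hgap0)]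
  calc 2 * σ ^ 2 * (1 - ρ ^ 2) * (√t - √(1 - exp (-t)))
      ≤ 2 * σ ^ 2 * t := mul_le_mul hA hgap hgap0 (by positivity)
    _ = 4 * σ ^ 2 * log 2 * ε := by ring
end
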